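/- arXiv:1610.04893 — 3 statements merged into one kernel-verified Lean document; each statement's English description precedes it below -/
import Mathlib

section
/- The function Σ : (0,∞) → ℝ defined by Σ(r) = (a + √(a² + r c² g²)) / (r c²), with c ≠ 0 and g ≠ 0, is strictly convex in r. -/
/-- The steady-state error `Σ(r) = (a + √(a² + r c² g²)) / (r c²)` is strictly
convex in `r` on `(0, ∞)`. -/
theorem scalar_ARE_solution_strictConvex (a c g : ℝ) (hc : c ≠ 0) (hg : g ≠ 0) :
    StrictConvexOn ℝ (Set.Ioi (0 : ℝ))
      (fun r : ℝ => (a + Real.sqrt (a ^ 2 + r * c ^ 2 * g ^ 2)) / (r * c ^ 2)) := by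
  have hc2 : (0:ℝ) < c ^ 2 := by positivity
  have hk : (0:ℝ) < c ^ 2 * g ^ 2 := by positivity
  -- key facts about s r := sqrt (a^2 + r*c^2*g^2) for r > 0
  have hs_pos : ∀ r : ℝ, 0 < r → a < Real.sqrt (a ^ 2 + r * c ^ 2 * g ^ 2) := by
    intro r hr
    have h1 : a ^ 2 < a ^ 2 + r * c ^ 2 * g ^ 2 := by nlinarith
    calc a ≤ |a| := le_abs_self a
      _ = Real.sqrt (a ^ 2) := (Real.sqrt_sq_eq_abs a).symm
      _ < Real.sqrt (a ^ 2 + r * c ^ 2 * g ^ 2) := Real.sqrt_lt_sqrt (by positivity) h1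
  -- the identity F r = g^2 / (s r - a)
  have hid : ∀ r : ℝ, 0 < r →
      (a + Real.sqrt (a ^ 2 + r * c ^ 2 * g ^ 2)) / (r * c ^ 2)
        = g ^ 2 / (Real.sqrt (a ^ 2 + r * c ^ 2 * g ^ 2) - a) := by
    intro r hr
    have hsa := hs_pos r hr
    have hsq : Real.sqrt (a ^ 2 + r * c ^ 2 * g ^ 2) ^ 2 = a ^ 2 + r * c ^ 2 * g ^ 2 :=
      Real.sq_sqrt (by nlinarith)
    rw [div_eq_div_iff (by positivity) (by linarith)]
    nlinarith [hsq]
  refine ⟨convex_Ioi 0, ?_⟩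
  intro x hx y hy hxy p q hp hq hpq
  simp only [Set.mem_Ioi] at hx hy
  set sx := Real.sqrt (a ^ 2 + x * c ^ 2 * g ^ 2) with hsx
  set sy := Real.sqrt (a ^ 2 + y * c ^ 2 * g ^ 2) with hsy
  set sz := Real.sqrt (a ^ 2 + (p • x + q • y) * c ^ 2 * g ^ 2) with hsz
  have hz : 0 < p • x + q • y := by
    simp only [smul_eq_mul]; nlinarith
  have hax := hs_pos x hx
  have hay := hs_pos y hy
  have haz := hs_pos _ hz
  -- strict concavity of sqrt gives sz > p*sx + q*sy
  have hconc : p * sx + q * sy < sz := by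
    have hAne : a ^ 2 + x * c ^ 2 * g ^ 2 ≠ a ^ 2 + y * c ^ 2 * g ^ 2 := by
      intro h; apply hxy; nlinarith [h]
    have := Real.strictConcaveOn_sqrt.2 (x := a ^ 2 + x * c ^ 2 * g ^ 2)
      (y := a ^ 2 + y * c ^ 2 * g ^ 2) (Set.mem_Ici.2 (by positivity)) (Set.mem_Ici.2 (by positivity)) hAne hp hq hpq
    have heq : p • (a ^ 2 + x * c ^ 2 * g ^ 2) + q • (a ^ 2 + y * c ^ 2 * g ^ 2)
        = a ^ 2 + (p • x + q • y) * c ^ 2 * g ^ 2 := by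
      simp only [smul_eq_mul]; ring_nf; nlinarith [hpq]
    rw [heq] at this
    simpa [hsx, hsy, hsz, smul_eq_mul] using this
  show (a + sz) / ((p • x + q • y) * c ^ 2) < p • ((a + sx) / (x * c ^ 2)) + q • ((a + sy) / (y * c ^ 2))
  rw [hsx, hsy, hsz, hid x hx, hid y hy, hid _ hz]
  have hux : 0 < sx - a := by linarith
  have huy : 0 < sy - a := by linarith
  have huz : 0 < sz - a := by linarith
  have ha' : p * a + q * a = a := by linear_combination a * hpq
  have hmid : 0 < p * sx + q * sy - a := by
    linarith [mul_pos hp hux, mul_pos hq huy, ha']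
  calc g ^ 2 / (sz - a) < g ^ 2 / (p * sx + q * sy - a) := by
        apply div_lt_div_of_pos_left (by positivity) hmid (by linarith)
    _ ≤ p • (g ^ 2 / (sx - a)) + q • (g ^ 2 / (sy - a)) := by
        simp only [smul_eq_mul]
        have huv : p * sx + q * sy - a = p * (sx - a) + q * (sy - a) := by
          linear_combination a * hpq
        rw [huv]
        set u := sx - a
        set v := sy - a
        rw [div_le_iff₀ (by positivity)]
        have e : p * (g ^ 2 / u) + q * (g ^ 2 / v) = g ^ 2 * (p * v + q * u) / (u * v) := by
          field_simp
        rw [e, div_mul_eq_mul_div, le_div_iff₀ (by positivity)]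
        have hd : g ^ 2 * (p * v + q * u) * (p * u + q * v) - g ^ 2 * (u * v)
            = g ^ 2 * (p * q * (u - v) ^ 2) := by
          linear_combination g ^ 2 * u * v * (p + q + 1) * hpq
        nlinarith [hd, mul_nonneg (sq_nonneg g)
          (mul_nonneg (mul_pos hp hq).le (sq_nonneg (u - v)))]
end

section
/- Let K : (0,∞) → ℝ^{n×n} be twice differentiable with K(r) symmetric positive definite, K'(r) symmetric, K''(r) symmetric negative semidefinite, and set Σ(r) = K(r)⁻¹. Then Σ''(r) = 2 Σ K' Σ K' Σ − Σ K'' Σ, and Σ''(r) is positive semidefinite; if additionally K'(r) is positive definite, then Σ''(r) is positive definite. -/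
open Matrix
open Topology Filter

attribute [local instance] Matrix.linftyOpNormedAddCommGroup Matrix.linftyOpNormedRing
  Matrix.linftyOpNormedAlgebra

private lemma posDef_conj_aux {n : ℕ} {A B : Matrix (Fin n) (Fin n) ℝ}
    (hA : A.PosDef) (hB : IsUnit B) : (Bᴴ * A * B).PosDef := by
  refine PosDef.of_dotProduct_mulVec_pos (Matrix.isHermitian_conjTranspose_mul_mul B hA.1) fun x hx => ?_
  have hBx : B *ᵥ x ≠ 0 := by
    intro h
    exact hx (Matrix.mulVec_injective_iff_isUnit.2 hB
      (h.trans (Matrix.mulVec_zero B).symm))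
  simpa only [star_mulVec, dotProduct_mulVec, vecMul_vecMul] using hA.dotProduct_mulVec_pos hBx

/-- For twice differentiable `K(r)` symmetric positive definite with `K'` symmetric
and `K'' ⪯ 0`, setting `Σ(r) = K(r)⁻¹`, one has
`Σ'' = 2 Σ K' Σ K' Σ − Σ K'' Σ ⪰ 0`; if moreover `K' ≻ 0`, then `Σ'' ≻ 0`. -/
theorem inverse_second_derivative_formula {n : ℕ}
    (K : ℝ → Matrix (Fin n) (Fin n) ℝ)
    (hdiff : ∀ r > (0 : ℝ), DifferentiableAt ℝ K r)
    (hdiff2 : ∀ r > (0 : ℝ), DifferentiableAt ℝ (deriv K) r)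
    (hsymm : ∀ r > (0 : ℝ), (K r).IsSymm)
    (hpd : ∀ r > (0 : ℝ), (K r).PosDef)
    (hsymm' : ∀ r > (0 : ℝ), (deriv K r).IsSymm)
    (hK'' : ∀ r > (0 : ℝ), (-(deriv (deriv K) r)).PosSemidef) :
    ∀ r > (0 : ℝ),
      deriv (deriv (fun r => (K r)⁻¹)) r =
        2 • ((K r)⁻¹ * deriv K r * (K r)⁻¹ * deriv K r * (K r)⁻¹) -
          (K r)⁻¹ * deriv (deriv K) r * (K r)⁻¹ ∧
      (deriv (deriv (fun r => (K r)⁻¹)) r).PosSemidef ∧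
      ((deriv K r).PosDef → (deriv (deriv (fun r => (K r)⁻¹)) r).PosDef) := by
  have hEq : (fun r => (K r)⁻¹) = fun r => Ring.inverse (K r) :=
    funext fun r => Matrix.nonsing_inv_eq_ringInverse _
  -- first derivative formula at every s > 0
  have hd1 : ∀ s ∈ Set.Ioi (0 : ℝ),
      HasDerivAt (fun r => (K r)⁻¹) (-((K s)⁻¹ * deriv K s * (K s)⁻¹)) s := by
    intro s hs
    have hu : IsUnit (K s) := (hpd s hs).isUnit
    have h := (hasFDerivAt_ringInverse (𝕜 := ℝ) hu.unit).comp_hasDerivAt s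
      ((hdiff s hs).hasDerivAt)
    rw [hEq]
    have hinv : ((hu.unit⁻¹ : (Matrix (Fin n) (Fin n) ℝ)ˣ) : Matrix (Fin n) (Fin n) ℝ)
        = (K s)⁻¹ := by
      rw [← Ring.inverse_unit hu.unit, hu.unit_spec, ← Matrix.nonsing_inv_eq_ringInverse]
    simp only [Function.comp_def, ContinuousLinearMap.neg_apply,
      ContinuousLinearMap.mulLeftRight_apply, hinv, hu.unit_spec] at h
    exact h
  intro r hr
  have hmem : Set.Ioi (0 : ℝ) ∈ 𝓝 r := isOpen_Ioi.mem_nhds hr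
  have hEvEq : deriv (fun r => (K r)⁻¹) =ᶠ[𝓝 r]
      fun s => -((K s)⁻¹ * deriv K s * (K s)⁻¹) :=
    Filter.eventuallyEq_of_mem hmem fun s hs => (hd1 s hs).deriv
  -- second derivative via product rule
  have hK''d : HasDerivAt (deriv K) (deriv (deriv K) r) r := (hdiff2 r hr).hasDerivAt
  have hSd : HasDerivAt (fun r => (K r)⁻¹) (-((K r)⁻¹ * deriv K r * (K r)⁻¹)) r :=
    hd1 r hr
  set A := (K r)⁻¹ with hA
  set B := deriv K r with hB
  set C := deriv (deriv K) r with hC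
  have h2 : HasDerivAt (fun s => -((K s)⁻¹ * deriv K s * (K s)⁻¹))
      (-(((-(A * B * A)) * B + A * C) * A + (A * B) * (-(A * B * A)))) r :=
    ((hSd.mul hK''d).mul hSd).neg
  have hderiv2 : deriv (deriv (fun r => (K r)⁻¹)) r =
      -(((-(A * B * A)) * B + A * C) * A + (A * B) * (-(A * B * A))) := by
    exact (h2.congr_of_eventuallyEq hEvEq).deriv
  have hform : deriv (deriv (fun r => (K r)⁻¹)) r =
      2 • (A * B * A * B * A) - A * C * A := by
    rw [hderiv2, two_smul]
    noncomm_ring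
  refine ⟨hform, ?_, ?_⟩
  · -- positive semidefinite
    have hSpd : A.PosDef := (hpd r hr).inv
    have hSh : Aᴴ = A := hSpd.1
    have hBh : Bᴴ = B := by
      rw [Matrix.conjTranspose_eq_transpose_of_trivial]
      exact hsymm' r hr
    have hM : A * B * A * B * A = (B * A)ᴴ * A * (B * A) := by
      rw [Matrix.conjTranspose_mul, hSh, hBh]; noncomm_ring
    have hMsd : (A * B * A * B * A).PosSemidef := by
      rw [hM]; exact hSpd.posSemidef.conjTranspose_mul_mul_same _
    have hNsd : (A * (-C) * A).PosSemidef := by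
      have := (hK'' r hr).conjTranspose_mul_mul_same A
      rwa [hSh] at this
    have hsplit : 2 • (A * B * A * B * A) - A * C * A =
        (A * B * A * B * A + A * B * A * B * A) + A * (-C) * A := by
      rw [two_smul]; noncomm_ring
    rw [hform, hsplit]
    exact (hMsd.add hMsd).add hNsd
  · -- positive definite when B is
    intro hBpd
    have hSpd : A.PosDef := (hpd r hr).inv
    have hSh : Aᴴ = A := hSpd.1
    have hBh : Bᴴ = B := by
      rw [Matrix.conjTranspose_eq_transpose_of_trivial]
      exact hsymm' r hr
    have hM : A * B * A * B * A = (B * A)ᴴ * A * (B * A) := by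
      rw [Matrix.conjTranspose_mul, hSh, hBh]; noncomm_ring
    have hMpd : (A * B * A * B * A).PosDef := by
      rw [hM]; exact posDef_conj_aux hSpd (hBpd.isUnit.mul hSpd.isUnit)
    have hMsd : (A * B * A * B * A).PosSemidef := hMpd.posSemidef
    have hNsd : (A * (-C) * A).PosSemidef := by
      have := (hK'' r hr).conjTranspose_mul_mul_same A
      rwa [hSh] at this
    have hsplit : 2 • (A * B * A * B * A) - A * C * A =
        (A * B * A * B * A + A * B * A * B * A) + A * (-C) * A := by
      rw [two_smul]; noncomm_ring
    rw [hform, hsplit]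
    exact (hMpd.add_posSemidef hMsd).add_posSemidef hNsd
end

section
/- Let A = diag(-1, -2), c = (1, 1)ᵀ, P = [[5, -3], [-3, 4]]. Then (A, c) is an observable pair, P is positive definite, Σ = [[2, -1], [-1, 1]] is a positive definite solution of A Σ + Σ Aᵀ − Σ c cᵀ Σ + P = 0, and the pair (A, Σc) is not controllable. -/
open Matrix

lemma posdef_aux (a b d : ℝ) (ha : 0 < a) (hdet : 0 < a * d - b * b) :
    (!![a, b; b, d] : Matrix (Fin 2) (Fin 2) ℝ).PosDef := by
  have hd : 0 < d := by nlinarith [sq_nonneg b]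
  rw [Matrix.posDef_iff_dotProduct_mulVec]; constructor
  · ext i j; fin_cases i <;> fin_cases j <;> simp [Matrix.IsHermitian]
  · intro x hx
    have h : x 0 ≠ 0 ∨ x 1 ≠ 0 := by
      by_contra h; push_neg at h
      exact hx (funext fun i => by fin_cases i <;> simp [h.1, h.2])
    simp [Matrix.mulVec, dotProduct, Fin.sum_univ_two]
    rcases h with h | h
    · nlinarith [sq_nonneg (b * x 0 + d * x 1), mul_pos hdet (mul_self_pos.mpr h)]
    · nlinarith [sq_nonneg (a * x 0 + b * x 1), mul_pos hdet (mul_self_pos.mpr h)]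

/-- The explicit counterexample: with `A = diag(-1,-2)`, `c = (1,1)ᵀ`,
`P = [[5,-3],[-3,4]]`, the pair `(A,c)` is observable, `P > 0`,
`Σ = [[2,-1],[-1,1]] > 0` solves `AΣ + ΣAᵀ − Σccᵀ Σ + P = 0`, yet `(A, Σc)` is
not controllable. -/
theorem counterexample_not_regular :
    let A : Matrix (Fin 2) (Fin 2) ℝ := !![-1, 0; 0, -2]
    let c : Fin 2 → ℝ := ![1, 1]
    let P : Matrix (Fin 2) (Fin 2) ℝ := !![5, -3; -3, 4]
    let S : Matrix (Fin 2) (Fin 2) ℝ := !![2, -1; -1, 1]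
    -- (A, c) is observable
    ((Matrix.of fun (i j : Fin 2) => ((Aᵀ ^ (j : ℕ)).mulVec c) i).rank = 2) ∧
    -- P is positive definite
    P.PosDef ∧
    -- Σ is a positive definite solution of the ARE
    S.PosDef ∧
    (A * S + S * Aᵀ - S * Matrix.vecMulVec c c * S + P = 0) ∧
    -- (A, Σc) is not controllable
    ¬ ((Matrix.of fun (i j : Fin 2) => ((A ^ (j : ℕ)).mulVec (S.mulVec c)) i).rank = 2) := by
  intro A c P S
  have hAT : Aᵀ = A := by
    ext i j; fin_cases i <;> fin_cases j <;> simp [A]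
  refine ⟨?_, ?_, ?_, ?_, ?_⟩
  · -- observability
    have hM : (Matrix.of fun (i j : Fin 2) => ((Aᵀ ^ (j : ℕ)).mulVec c) i)
        = (!![1, -1; 1, -2] : Matrix (Fin 2) (Fin 2) ℝ) := by
      rw [hAT]
      ext i j
      fin_cases i <;> fin_cases j <;>
        simp [A, c, pow_succ, Matrix.mulVec, dotProduct, Fin.sum_univ_two,
          Matrix.mul_apply]
    rw [hM]
    have hu : IsUnit (!![1, -1; 1, -2] : Matrix (Fin 2) (Fin 2) ℝ) := by
      rw [Matrix.isUnit_iff_isUnit_det]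
      simp [Matrix.det_fin_two_of]
      norm_num
    simpa using Matrix.rank_of_isUnit _ hu
  · exact posdef_aux 5 (-3) 4 (by norm_num) (by norm_num)
  · exact posdef_aux 2 (-1) 1 (by norm_num) (by norm_num)
  · have hcc : Matrix.vecMulVec c c = (!![1, 1; 1, 1] : Matrix (Fin 2) (Fin 2) ℝ) := by
      ext i j
      fin_cases i <;> fin_cases j <;> simp [c, Matrix.vecMulVec_apply]
    rw [hAT, hcc]
    ext i j
    fin_cases i <;> fin_cases j <;>
      simp [A, c, P, S, Matrix.mul_apply, Fin.sum_univ_two] <;> norm_num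
  · intro hr
    have hM : (Matrix.of fun (i j : Fin 2) => ((A ^ (j : ℕ)).mulVec (S.mulVec c)) i)
        = ((!![1; 0] : Matrix (Fin 2) (Fin 1) ℝ) * (!![1, -1] : Matrix (Fin 1) (Fin 2) ℝ)) := by
      ext i j
      fin_cases i <;> fin_cases j <;>
        simp [A, c, S, pow_succ, Matrix.mulVec, dotProduct, Fin.sum_univ_two,
          Matrix.mul_apply, Fin.sum_univ_one] <;> norm_num
    rw [hM] at hr
    have := (Matrix.rank_mul_le_right (!![(1:ℝ); 0] : Matrix (Fin 2) (Fin 1) ℝ)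
      (!![1, -1] : Matrix (Fin 1) (Fin 2) ℝ)).trans
      (Matrix.rank_le_card_height (!![1, -1] : Matrix (Fin 1) (Fin 2) ℝ))
    rw [Fintype.card_fin] at this
    omega
end
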